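/- Let d ≥ 1 and let N = (n_1,…,n_d) be a d-tuple of positive integers, at least one of which is ≥ 2. Then log(∏_{Λ_K ≠ 0} Λ_K) = V(N) · 𝓘_d(0) + 𝓗_N(0), where the product runs over the nonzero eigenvalues Λ_K, 𝓘_d(0) = −∫_0^∞ (e^{−2dt} I_0(2t)^d − e^{−t}) dt/t, and 𝓗_N(0) = −∫_0^∞ (θ_N(t) − V(N) e^{−2dt} I_0(2t)^d − 1 + e^{−t}) dt/t; both integrals converge absolutely. -/

import Mathlib

open MeasureTheory Real Filter

/-- The modified `I`-Bessel function of integer order `x`, via its integral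
representation `I_x(t) = (1/π) ∫_0^π e^{t cos θ} cos(xθ) dθ`. -/
noncomputable def besselI (x : ℤ) (t : ℝ) : ℝ :=
  (1 / Real.pi) * ∫ θ in (0:ℝ)..Real.pi, Real.exp (t * Real.cos θ) * Real.cos ((x : ℝ) * θ)

/-- Eigenvalues of the combinatorial Laplacian on the discrete torus determined by `N`. -/
noncomputable def Lam (d : ℕ) (N : Fin d → ℕ) (K : (j : Fin d) → Fin (N j)) : ℝ :=
  2 * d - ∑ j, 2 * Real.cos (2 * Real.pi * (K j : ℝ) / (N j : ℝ))

/-- The theta function (heat trace) of the discrete torus determined by `N`. -/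
noncomputable def discTheta (d : ℕ) (N : Fin d → ℕ) (t : ℝ) : ℝ :=
  ∑ K : ((j : Fin d) → Fin (N j)), Real.exp (-(Lam d N K) * t)

/-!
Each nonzero eigenvalue `λ` satisfies Frullani's identity
`log λ = ∫₀^∞ (e^{-t} - e^{-λt}) dt/t`. The zero eigenvalue is simple, so
`θ_N(t) = 1 + ∑_{Λ_K ≠ 0} e^{-Λ_K t}` with `V(N) - 1` terms in the sum, and the integrand of
`𝓗_N(0)` is minus the sum of these Frullani integrands minus `V(N)` times the integrand of
`𝓘_d(0)`. The latter is integrable because `p(t) = e^{-2t} I_0(2t)` lies in `[e^{-4t}, 1]`, which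
makes `(p(t)^d - e^{-t})/t` bounded near `0`, and `p(t) = O(t^{-1/2})` by a Gaussian bound, which
makes it `O(t^{-3/2})` at infinity.
-/

open Set Topology

section Frullani

theorem integrableOn_exp_neg_mul_sub_exp_neg_mul_div {a b : ℝ} (ha : 0 < a) (hb : 0 < b) :
    IntegrableOn (fun t => (exp (-(a * t)) - exp (-(b * t))) / t) (Ioi 0) := by
  wlog hab : a ≤ b generalizing a b
  · refine (this hb ha (le_of_not_ge hab)).neg.congr_fun (fun t _ => ?_) measurableSet_Ioi
    simp only [Pi.neg_apply, ← neg_div, neg_sub]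
  refine ((exp_neg_integrableOn_Ioi 0 ha).const_mul (b - a)).mono' ?_ ?_
  · exact (ContinuousOn.div (by fun_prop) continuousOn_id fun t ht => ne_of_gt ht)
      |>.aestronglyMeasurable measurableSet_Ioi
  · filter_upwards [ae_restrict_mem measurableSet_Ioi] with t (ht : 0 < t)
    have hle : exp (-(b * t)) ≤ exp (-(a * t)) := exp_le_exp.2 (by nlinarith)
    have hdiff : exp (-(a * t)) - exp (-(b * t)) ≤ (b - a) * exp (-a * t) * t := by
      have h := one_sub_le_exp_neg ((b - a) * t)
      have hsplit : exp (-(b * t)) = exp (-(a * t)) * exp (-((b - a) * t)) := by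
        rw [← exp_add]; ring_nf
      rw [hsplit, neg_mul]
      nlinarith [exp_pos (-(a * t))]
    rw [norm_div, Real.norm_of_nonneg (sub_nonneg.2 hle), Real.norm_of_nonneg ht.le,
      div_le_iff₀ ht]
    exact hdiff

theorem integral_exp_neg_mul_sub_exp_neg_mul_div {a b : ℝ} (ha : 0 < a) (hb : 0 < b) :
    ∫ t in Ioi 0, (exp (-(a * t)) - exp (-(b * t))) / t = log b - log a := by
  have hcont : Continuous fun x : ℝ => exp (-x) := by fun_prop
  have hzero : Tendsto (fun x : ℝ => exp (-x)) (𝓝[>] 0) (𝓝 1) := by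
    simpa using (hcont.tendsto 0).mono_left nhdsWithin_le_nhds
  have h := Frullani.integral_Ioi_eq (hcont.locallyIntegrable.locallyIntegrableOn _) ha hb hzero
    tendsto_exp_neg_atTop_nhds_zero
    (by simpa only [smul_eq_mul, inv_mul_eq_div] using
      integrableOn_exp_neg_mul_sub_exp_neg_mul_div ha hb)
  simp only [smul_eq_mul, inv_mul_eq_div, sub_zero, mul_one] at h
  rw [h, log_div hb.ne' ha.ne']

end Frullani

section HeatKernel

theorem besselI_zero (t : ℝ) : besselI 0 t = π⁻¹ * ∫ θ in 0..π, exp (t * cos θ) := by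
  simp [besselI]

theorem continuous_besselI_zero : Continuous (besselI 0) := by
  simp only [funext besselI_zero]
  exact continuous_const.mul <|
    intervalIntegral.continuous_parametric_intervalIntegral_of_continuous' (by fun_prop) 0 π

theorem besselI_zero_mem_Icc (t : ℝ) : besselI 0 t ∈ Icc (exp (-|t|)) (exp |t|) := by
  have hπ : 0 ≤ π⁻¹ := by positivity
  have hint : IntervalIntegrable (fun θ => exp (t * cos θ)) volume 0 π :=
    (by fun_prop : Continuous fun θ => exp (t * cos θ)).intervalIntegrable 0 π
  have habs (θ : ℝ) : |t * cos θ| ≤ |t| := by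
    rw [abs_mul]; exact mul_le_of_le_one_right (abs_nonneg t) (abs_cos_le_one θ)
  have hconst (c : ℝ) : c = π⁻¹ * ∫ _ in 0..π, c := by
    rw [intervalIntegral.integral_const, smul_eq_mul, sub_zero, inv_mul_cancel_left₀ pi_ne_zero]
  rw [besselI_zero, mem_Icc]
  constructor
  · rw [hconst (exp (-|t|))]
    refine mul_le_mul_of_nonneg_left (intervalIntegral.integral_mono_on pi_pos.le
      intervalIntegrable_const hint fun θ _ => ?_) hπ
    exact exp_le_exp.2 (neg_le_of_abs_le (habs θ))
  · rw [hconst (exp |t|)]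
    refine mul_le_mul_of_nonneg_left (intervalIntegral.integral_mono_on pi_pos.le
      hint intervalIntegrable_const fun θ _ => ?_) hπ
    exact exp_le_exp.2 (le_of_abs_le (habs θ))

/-- The diagonal heat kernel of the combinatorial Laplacian on `ℤ`. -/
noncomputable def latticeHeatKernel (t : ℝ) : ℝ := exp (-(2 * t)) * besselI 0 (2 * t)

theorem exp_neg_mul_besselI_zero_pow (d : ℕ) (t : ℝ) :
    exp (-(2 * d * t)) * besselI 0 (2 * t) ^ d = latticeHeatKernel t ^ d := by
  rw [latticeHeatKernel, mul_pow, ← exp_nat_mul]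
  ring_nf

theorem continuous_latticeHeatKernel : Continuous latticeHeatKernel :=
  (by fun_prop : Continuous fun t : ℝ => exp (-(2 * t))).mul
    (continuous_besselI_zero.comp (continuous_const.mul continuous_id))

theorem exp_neg_four_mul_le_latticeHeatKernel {t : ℝ} (ht : 0 ≤ t) :
    exp (-(4 * t)) ≤ latticeHeatKernel t := by
  have h := (besselI_zero_mem_Icc (2 * t)).1
  rw [abs_of_nonneg (by positivity)] at h
  calc exp (-(4 * t)) = exp (-(2 * t)) * exp (-(2 * t)) := by rw [← exp_add]; ring_nf
    _ ≤ latticeHeatKernel t := mul_le_mul_of_nonneg_left h (exp_pos _).le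

theorem latticeHeatKernel_le_one {t : ℝ} (ht : 0 ≤ t) : latticeHeatKernel t ≤ 1 := by
  have h := (besselI_zero_mem_Icc (2 * t)).2
  rw [abs_of_nonneg (by positivity)] at h
  calc latticeHeatKernel t ≤ exp (-(2 * t)) * exp (2 * t) :=
        mul_le_mul_of_nonneg_left h (exp_pos _).le
    _ = 1 := by rw [← exp_add, neg_add_cancel, exp_zero]

theorem latticeHeatKernel_nonneg {t : ℝ} (ht : 0 ≤ t) : 0 ≤ latticeHeatKernel t :=
  (exp_pos _).le.trans (exp_neg_four_mul_le_latticeHeatKernel ht)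

theorem latticeHeatKernel_le_rpow {t : ℝ} (ht : 0 < t) :
    latticeHeatKernel t ≤ √π / 2 * t ^ (-(1 / 2) : ℝ) := by
  have hint (f : ℝ → ℝ) (hf : Continuous f) : IntervalIntegrable f volume 0 π :=
    hf.intervalIntegrable 0 π
  have hexp : latticeHeatKernel t = π⁻¹ * ∫ θ in 0..π, exp (2 * t * (cos θ - 1)) := by
    rw [latticeHeatKernel, besselI_zero, mul_left_comm, ← intervalIntegral.integral_const_mul]
    simp only [← exp_add]
    ring_nf
  have hgauss : ∫ θ in 0..π, exp (2 * t * (cos θ - 1))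
      ≤ ∫ θ in 0..π, exp (-(4 * t / π ^ 2) * θ ^ 2) := by
    refine intervalIntegral.integral_mono_on pi_pos.le (hint _ (by fun_prop))
      (hint _ (by fun_prop)) fun θ hθ => exp_le_exp.2 ?_
    have hcos : cos θ ≤ 1 - 2 / π ^ 2 * θ ^ 2 :=
      cos_le_one_sub_mul_cos_sq (abs_le.2 ⟨by linarith [hθ.1, pi_pos], hθ.2⟩)
    refine (mul_le_mul_of_nonneg_left (sub_le_sub_right hcos 1) (by positivity)).trans_eq ?_
    ring
  have hline :
      ∫ θ in 0..π, exp (-(4 * t / π ^ 2) * θ ^ 2) ≤ √(π / (4 * t / π ^ 2)) := by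
    rw [← integral_gaussian, intervalIntegral.integral_of_le pi_pos.le]
    exact setIntegral_le_integral (integrable_exp_neg_mul_sq (by positivity))
      (.of_forall fun θ => (exp_pos _).le)
  have hval : π⁻¹ * √(π / (4 * t / π ^ 2)) = √π / 2 * t ^ (-(1 / 2) : ℝ) := by
    rw [rpow_neg ht.le, ← sqrt_eq_rpow, show π / (4 * t / π ^ 2) = (π * √π / (2 * √t)) ^ 2 by
      field_simp; rw [sq_sqrt pi_pos.le, sq_sqrt ht.le]; ring, sqrt_sq (by positivity)]
    field_simp
  calc latticeHeatKernel t ≤ π⁻¹ * √(π / (4 * t / π ^ 2)) := by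
        rw [hexp]; exact mul_le_mul_of_nonneg_left (hgauss.trans hline) (by positivity)
    _ = _ := hval

theorem abs_latticeHeatKernel_pow_sub_exp_neg_le {d : ℕ} (hd : d ≠ 0) {t : ℝ} (ht : 0 ≤ t) :
    |latticeHeatKernel t ^ d - exp (-t)| ≤ 4 * d * t := by
  have hd1 : (1 : ℝ) ≤ d := by exact_mod_cast Nat.one_le_iff_ne_zero.2 hd
  have hlow : exp (-(4 * d * t)) ≤ latticeHeatKernel t ^ d := by
    rw [show -(4 * d * t) = d * -(4 * t) by ring, exp_nat_mul]
    exact pow_le_pow_left₀ (exp_pos _).le (exp_neg_four_mul_le_latticeHeatKernel ht) d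
  have hup : latticeHeatKernel t ^ d ≤ 1 :=
    pow_le_one₀ (latticeHeatKernel_nonneg ht) (latticeHeatKernel_le_one ht)
  have hexp_low : exp (-(4 * d * t)) ≤ exp (-t) := exp_le_exp.2 (by nlinarith)
  have hexp_up : exp (-t) ≤ 1 := exp_le_one_iff.2 (by linarith)
  have hlin := one_sub_le_exp_neg (4 * d * t)
  rw [abs_le]
  constructor <;> linarith

theorem integrableOn_latticeHeatKernel_pow_sub_exp_neg_div {d : ℕ} (hd : d ≠ 0) :
    IntegrableOn (fun t => (latticeHeatKernel t ^ d - exp (-t)) / t) (Ioi 0) := by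
  have hmeas : AEStronglyMeasurable (fun t => (latticeHeatKernel t ^ d - exp (-t)) / t)
      (volume.restrict (Ioi 0)) :=
    (((continuous_latticeHeatKernel.pow d).sub (by fun_prop)).continuousOn.div continuousOn_id
      fun t ht => ne_of_gt ht).aestronglyMeasurable measurableSet_Ioi
  rw [← Ioc_union_Ioi_eq_Ioi zero_le_one]
  refine IntegrableOn.union ?_ ?_
  · refine (integrableOn_const (C := 4 * (d : ℝ)) (by simp)).mono'
      (hmeas.mono_set Ioc_subset_Ioi_self) ?_
    filter_upwards [ae_restrict_mem measurableSet_Ioc] with t ⟨ht, _⟩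
    rw [norm_div, Real.norm_eq_abs, Real.norm_of_nonneg ht.le, div_le_iff₀ ht]
    exact abs_latticeHeatKernel_pow_sub_exp_neg_le hd ht.le
  · refine (((integrableOn_Ioi_rpow_of_lt (by norm_num : -(3 / 2) < (-1 : ℝ)) one_pos).const_mul
      (√π / 2)).add (integrableOn_exp_neg_Ioi 1)).mono'
      (hmeas.mono_set (Ioi_subset_Ioi zero_le_one)) ?_
    filter_upwards [ae_restrict_mem measurableSet_Ioi] with t (ht : 1 < t)
    have ht0 : 0 < t := one_pos.trans ht
    have hp0 := latticeHeatKernel_nonneg ht0.le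
    have hpow : latticeHeatKernel t ^ d ≤ latticeHeatKernel t :=
      pow_le_of_le_one hp0 (latticeHeatKernel_le_one ht0.le) hd
    have hrpow : t ^ (-(3 / 2) : ℝ) = t ^ (-(1 / 2) : ℝ) / t := by
      rw [← rpow_sub_one ht0.ne']; norm_num
    have hdecay : latticeHeatKernel t / t ≤ √π / 2 * t ^ (-(3 / 2) : ℝ) := by
      rw [hrpow, ← mul_div_assoc]
      exact div_le_div_of_nonneg_right (latticeHeatKernel_le_rpow ht0) ht0.le
    have hexp : exp (-t) / t ≤ exp (-t) := div_le_self (exp_pos _).le ht.le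
    calc ‖(latticeHeatKernel t ^ d - exp (-t)) / t‖
        ≤ latticeHeatKernel t / t + exp (-t) / t := by
          rw [norm_div, Real.norm_of_nonneg ht0.le, ← add_div]
          refine div_le_div_of_nonneg_right ((norm_sub_le _ _).trans ?_) ht0.le
          rw [Real.norm_of_nonneg (pow_nonneg hp0 d), Real.norm_of_nonneg (exp_pos _).le]
          linarith
      _ ≤ √π / 2 * t ^ (-(3 / 2) : ℝ) + exp (-t) := add_le_add hdecay hexp

end HeatKernel

section Spectrum

variable {d : ℕ} {N : Fin d → ℕ}

theorem Lam_eq_sum (K : (j : Fin d) → Fin (N j)) :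
    Lam d N K = ∑ j, 2 * (1 - cos (2 * π * (K j : ℝ) / (N j : ℝ))) := by
  simp only [Lam, mul_one_sub, Finset.sum_sub_distrib, Finset.sum_const, Finset.card_univ,
    Fintype.card_fin, nsmul_eq_mul]
  ring

theorem Lam_nonneg (K : (j : Fin d) → Fin (N j)) : 0 ≤ Lam d N K := by
  rw [Lam_eq_sum]
  exact Finset.sum_nonneg fun j _ => by linarith [cos_le_one (2 * π * (K j : ℝ) / (N j : ℝ))]

theorem cos_two_pi_mul_div_eq_one_iff {k n : ℕ} (hk : k < n) :
    cos (2 * π * k / n) = 1 ↔ k = 0 := by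
  have hn : (0 : ℝ) < n := by exact_mod_cast (Nat.zero_le k).trans_lt hk
  have hkn : (k : ℝ) / n < 1 := (div_lt_one hn).2 (by exact_mod_cast hk)
  have hk0 : 0 ≤ (k : ℝ) / n := by positivity
  rw [mul_div_assoc, cos_eq_one_iff_of_lt_of_lt (by nlinarith [pi_pos]) (by nlinarith [pi_pos])]
  simp [pi_ne_zero, hn.ne']

theorem Lam_eq_zero_iff (K : (j : Fin d) → Fin (N j)) :
    Lam d N K = 0 ↔ ∀ j, (K j : ℕ) = 0 := by
  have hterm (x : ℝ) : 0 ≤ 2 * (1 - cos x) := by linarith [cos_le_one x]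
  rw [Lam_eq_sum, Finset.sum_eq_zero_iff_of_nonneg fun j _ => hterm _]
  refine forall_congr' fun j => ?_
  simp only [Finset.mem_univ, true_implies]
  rw [← cos_two_pi_mul_div_eq_one_iff (K j).is_lt]
  constructor <;> intro h <;> linarith

theorem card_filter_Lam_eq_zero (hN : ∀ j, 0 < N j) :
    (Finset.univ.filter fun K : (j : Fin d) → Fin (N j) => Lam d N K = 0).card = 1 := by
  rw [Finset.card_eq_one]
  refine ⟨fun j => ⟨0, hN j⟩, ?_⟩
  ext K
  simp [Lam_eq_zero_iff, funext_iff, Fin.ext_iff]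

theorem discTheta_eq_one_add_sum (hN : ∀ j, 0 < N j) (t : ℝ) :
    discTheta d N t = 1 + ∑ K ∈ Finset.univ.filter (fun K => Lam d N K ≠ 0),
      exp (-(Lam d N K * t)) := by
  rw [discTheta, ← Finset.sum_filter_add_sum_filter_not Finset.univ (fun K => Lam d N K = 0)]
  congr 1
  · rw [Finset.sum_congr rfl fun K hK => by rw [(Finset.mem_filter.1 hK).2, neg_zero, zero_mul,
      exp_zero], Finset.sum_const, card_filter_Lam_eq_zero hN, one_smul]
  · simp only [neg_mul]

theorem card_filter_Lam_ne_zero_add_one (hN : ∀ j, 0 < N j) :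
    ((Finset.univ.filter fun K : (j : Fin d) → Fin (N j) => Lam d N K ≠ 0).card : ℝ) + 1
      = ∏ j, (N j : ℝ) := by
  rw [← Nat.cast_one, ← card_filter_Lam_eq_zero hN, add_comm, ← Nat.cast_add,
    Finset.card_filter_add_card_filter_not, Finset.card_univ, Fintype.card_pi]
  simp

end Spectrum

theorem log_det_at_zero_general (d : ℕ) (hd : 1 ≤ d) (N : Fin d → ℕ)
    (hN : ∀ j, 0 < N j) :
    IntegrableOn (fun t : ℝ =>
        (Real.exp (-(2 * d * t)) * (besselI 0 (2 * t)) ^ d - Real.exp (-t)) / t)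
      (Set.Ioi (0:ℝ)) ∧
    IntegrableOn (fun t : ℝ =>
        (discTheta d N t - (∏ j, (N j : ℝ)) * Real.exp (-(2 * d * t)) * (besselI 0 (2 * t)) ^ d
          - 1 + Real.exp (-t)) / t) (Set.Ioi (0:ℝ)) ∧
    Real.log (∏ K ∈ Finset.univ.filter (fun K : (j : Fin d) → Fin (N j) => Lam d N K ≠ 0),
        Lam d N K)
      = (∏ j, (N j : ℝ)) *
          (-∫ t in Set.Ioi (0:ℝ),
            (Real.exp (-(2 * d * t)) * (besselI 0 (2 * t)) ^ d - Real.exp (-t)) / t) +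
        (-∫ t in Set.Ioi (0:ℝ),
          (discTheta d N t - (∏ j, (N j : ℝ)) * Real.exp (-(2 * d * t)) * (besselI 0 (2 * t)) ^ d
            - 1 + Real.exp (-t)) / t) := by
  set S := Finset.univ.filter fun K : (j : Fin d) → Fin (N j) => Lam d N K ≠ 0 with hS
  have hpos (K) (hK : K ∈ S) : 0 < Lam d N K :=
    (Lam_nonneg K).lt_of_ne' (Finset.mem_filter.1 hK).2
  have hI := integrableOn_latticeHeatKernel_pow_sub_exp_neg_div (Nat.one_le_iff_ne_zero.1 hd)
  have hF (K) (hK : K ∈ S) := integrableOn_exp_neg_mul_sub_exp_neg_mul_div (hpos K hK) one_pos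
  -- the zero mode cancels the `-1`; the `V - 1` copies of `e^{-t}` pair off with the nonzero modes
  have hsplit : (fun t => (discTheta d N t - (∏ j, (N j : ℝ)) * (latticeHeatKernel t ^ d)
        - 1 + exp (-t)) / t)
      = fun t => ∑ K ∈ S, (exp (-(Lam d N K * t)) - exp (-(1 * t))) / t
          - (∏ j, (N j : ℝ)) * ((latticeHeatKernel t ^ d - exp (-t)) / t) := by
    funext t
    rw [discTheta_eq_one_add_sum hN, one_mul, ← Finset.sum_div, Finset.sum_sub_distrib,
      Finset.sum_const, nsmul_eq_mul, ← card_filter_Lam_ne_zero_add_one hN, ← hS]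
    ring
  simp only [mul_assoc (∏ j, (N j : ℝ)), exp_neg_mul_besselI_zero_pow]
  refine ⟨hI, hsplit ▸ (integrable_finsetSum _ hF).sub (hI.const_mul _), ?_⟩
  rw [hsplit, integral_sub (integrable_finsetSum _ hF) (hI.const_mul _), integral_const_mul,
    integral_finsetSum _ hF, Finset.sum_congr rfl fun K hK =>
      integral_exp_neg_mul_sub_exp_neg_mul_div (hpos K hK) one_pos,
    log_prod fun K hK => (hpos K hK).ne']
  simp only [log_one, zero_sub, Finset.sum_neg_distrib]
  ring

/-- The determinant of the Laplacian on the discrete torus expressed via the special values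
`𝓘_d(0)` and `𝓗_N(0)`, together with the absolute convergence of both integrals. -/
theorem log_det_at_zero (d : ℕ) (hd : 1 ≤ d) (N : Fin d → ℕ)
    (hN : ∀ j, 0 < N j) (hN2 : ∃ j, 2 ≤ N j) :
    IntegrableOn (fun t : ℝ =>
        (Real.exp (-(2 * d * t)) * (besselI 0 (2 * t)) ^ d - Real.exp (-t)) / t)
      (Set.Ioi (0:ℝ)) ∧
    IntegrableOn (fun t : ℝ =>
        (discTheta d N t - (∏ j, (N j : ℝ)) * Real.exp (-(2 * d * t)) * (besselI 0 (2 * t)) ^ d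
          - 1 + Real.exp (-t)) / t) (Set.Ioi (0:ℝ)) ∧
    Real.log (∏ K ∈ Finset.univ.filter (fun K : (j : Fin d) → Fin (N j) => Lam d N K ≠ 0),
        Lam d N K)
      = (∏ j, (N j : ℝ)) *
          (-∫ t in Set.Ioi (0:ℝ),
            (Real.exp (-(2 * d * t)) * (besselI 0 (2 * t)) ^ d - Real.exp (-t)) / t) +
        (-∫ t in Set.Ioi (0:ℝ),
          (discTheta d N t - (∏ j, (N j : ℝ)) * Real.exp (-(2 * d * t)) * (besselI 0 (2 * t)) ^ d
            - 1 + Real.exp (-t)) / t) :=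
  log_det_at_zero_general d hd N hN
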